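/- arXiv:1610.02582 — 8 statements merged into one kernel-verified Lean document; each statement's English description precedes it below -/
import Mathlib

section
/- Let X = {1,2,3} and define m_s : X³ → [0,∞) to be the symmetric function (invariant under permutations of its three arguments) determined by m_s(1,2,3) = 6, m_s(1,1,2) = m_s(2,2,1) = m_s(1,1,1) = 8, m_s(1,1,3) = m_s(3,3,1) = m_s(3,3,2) = m_s(2,2,3) = 7, m_s(2,2,2) = 9, m_s(3,3,3) = 5. Then m_s is an M_s-metric on X, but m_s is not a partial S-metric on X (indeed m_s(1,1,1) > m_s(1,2,3), violating axiom (iii) of a partial S-metric). -/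
/-!
Only axiom (4) needs an argument. Put
`δ(x,y,z) = mₛ(x,y,z) - min {mₛ(x,x,x), mₛ(y,y,y), mₛ(z,z,z)}`. Then `δ ≤ 2`,
`δ(x,y,z) = 0` unless `{x,y,z}` meets both `{1,2}` and `{3}`, and `δ(x,x,t) = 2` whenever
exactly one of `x, t` is `3`. A triple meeting both classes has a member in the class not
containing `t`, so the right-hand side of (4) is then at least `2`.
-/

open Filter Topology

/-- `msmin m x y z = min {m(x,x,x), m(y,y,y), m(z,z,z)}`. -/
def msmin {X : Type*} (m : X → X → X → ℝ) (x y z : X) : ℝ :=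
  min (m x x x) (min (m y y y) (m z z z))

/-- `msmax m x y z = max {m(x,x,x), m(y,y,y), m(z,z,z)}`. -/
def msmax {X : Type*} (m : X → X → X → ℝ) (x y z : X) : ℝ :=
  max (m x x x) (max (m y y y) (m z z z))

/-- `m` is an `Mₛ`-metric on `X`. -/
structure IsMsMetric {X : Type*} (m : X → X → X → ℝ) : Prop where
  nonneg : ∀ x y z, 0 ≤ m x y z
  eq_iff : ∀ x y, (m x x x = m y y y ∧ m y y y = m x x y) ↔ x = y
  min_le : ∀ x y z, msmin m x y z ≤ m x y z
  symm : ∀ x y, m x x y = m y y x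
  ineq : ∀ x y z t, m x y z - msmin m x y z ≤
    (m x x t - msmin m x x t) + (m y y t - msmin m y y t) + (m z z t - msmin m z z t)

/-- `S` is a partial `S`-metric on `X`. -/
structure IsPartialSMetric {X : Type*} (S : X → X → X → ℝ) : Prop where
  nonneg : ∀ x y z, 0 ≤ S x y z
  eq_iff : ∀ x y, (S x x x = S y y y ∧ S y y y = S x x y) ↔ x = y
  triangle : ∀ x y z t, S x y z ≤ S x x t + S y y t + S z z t - S t t t
  self_le : ∀ x y z, S x x x ≤ S x y z
  symm : ∀ x y, S x x y = S y y x

/-- The self value: `exSelf i` is `mₛ(i,i,i)`, where `0,1,2` play the roles of `1,2,3`. -/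
def exSelf : Fin 3 → ℝ
  | 0 => 8
  | 1 => 9
  | 2 => 5

/-- The value on a pair of distinct points `{a, b}`:
`mₛ(1,1,2) = 8`, `mₛ(1,1,3) = 7`, `mₛ(2,2,3) = 7` (with `0,1,2` playing the roles of `1,2,3`). -/
def exPair (a b : Fin 3) : ℝ :=
  if (a = 0 ∧ b = 1) ∨ (a = 1 ∧ b = 0) then 8 else 7

/-- The symmetric function on `{1,2,3}³` (here `Fin 3`, with `0,1,2` playing the roles of
`1,2,3`) determined by `mₛ(1,2,3) = 6`, `mₛ(1,1,2) = mₛ(1,1,1) = 8`,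
`mₛ(1,1,3) = mₛ(2,2,3) = 7`, `mₛ(2,2,2) = 9`, `mₛ(3,3,3) = 5`. -/
def exMs (x y z : Fin 3) : ℝ :=
  if x = y then (if y = z then exSelf x else exPair x z)
  else if y = z then exPair y x
  else if x = z then exPair x y
  else 6

def msDev {X : Type*} (m : X → X → X → ℝ) (x y z : X) : ℝ :=
  m x y z - msmin m x y z

/-- If `x, y, z` do not lie in one fibre of `f`, one of them lies in a fibre other than that of
`t`, so the right-hand side is at least `c`. -/
theorem msDev_le_add_of_separating {X Y : Type*} (m : X → X → X → ℝ) (f : X → Y) (c : ℝ)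
    (nonneg : ∀ x t, 0 ≤ msDev m x x t)
    (le_of_ne : ∀ x t, f x ≠ f t → c ≤ msDev m x x t)
    (le_bound : ∀ x y z, msDev m x y z ≤ c)
    (le_zero : ∀ x y z, f x = f y → f y = f z → msDev m x y z ≤ 0) (x y z t : X) :
    msDev m x y z ≤ msDev m x x t + msDev m y y t + msDev m z z t := by
  have hx := nonneg x t
  have hy := nonneg y t
  have hz := nonneg z t
  by_cases hxy : f x = f y
  · by_cases hyz : f y = f z
    · linarith [le_zero x y z hxy hyz]
    · have := le_bound x y z
      by_cases hyt : f y = f t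
      · linarith [le_of_ne z t fun hzt => hyz (hyt.trans hzt.symm)]
      · linarith [le_of_ne y t hyt]
  · have := le_bound x y z
    by_cases hxt : f x = f t
    · linarith [le_of_ne y t fun hyt => hxy (hxt.trans hyt.symm)]
    · linarith [le_of_ne x t hxt]

theorem exSelf_injective : Function.Injective exSelf := by
  intro a b
  fin_cases a <;> fin_cases b <;> norm_num [exSelf]

theorem exPair_comm (a b : Fin 3) : exPair a b = exPair b a := by
  unfold exPair
  congr 1
  exact propext (by tauto)

theorem exMs_self (x : Fin 3) : exMs x x x = exSelf x := by
  simp [exMs]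

theorem exMs_pair {x y : Fin 3} (h : x ≠ y) : exMs x x y = exPair x y := by
  simp [exMs, h]

theorem exMs_nonneg (x y z : Fin 3) : 0 ≤ exMs x y z := by
  fin_cases x <;> fin_cases y <;> fin_cases z <;> norm_num [exMs, exSelf, exPair]

theorem exMs_eq_iff (x y : Fin 3) :
    (exMs x x x = exMs y y y ∧ exMs y y y = exMs x x y) ↔ x = y := by
  refine ⟨fun h => exSelf_injective ?_, fun h => h ▸ ⟨rfl, rfl⟩⟩
  simpa only [exMs_self] using h.1

theorem exMs_symm (x y : Fin 3) : exMs x x y = exMs y y x := by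
  rcases eq_or_ne x y with rfl | h
  · rfl
  · rw [exMs_pair h, exMs_pair h.symm, exPair_comm]

theorem exMs_msDev_nonneg (x y z : Fin 3) : 0 ≤ msDev exMs x y z := by
  fin_cases x <;> fin_cases y <;> fin_cases z <;> norm_num [msDev, msmin, exMs, exSelf, exPair]

theorem exMs_msDev_le_two (x y z : Fin 3) : msDev exMs x y z ≤ 2 := by
  fin_cases x <;> fin_cases y <;> fin_cases z <;> norm_num [msDev, msmin, exMs, exSelf, exPair]

theorem two_le_exMs_msDev {x t : Fin 3} (h : (x = 2) ≠ (t = 2)) : 2 ≤ msDev exMs x x t := by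
  fin_cases x <;> fin_cases t <;>
    revert h <;> norm_num [msDev, msmin, exMs, exSelf, exPair, Fin.ext_iff]

theorem exMs_msDev_nonpos {x y z : Fin 3} (hxy : (x = 2) = (y = 2)) (hyz : (y = 2) = (z = 2)) :
    msDev exMs x y z ≤ 0 := by
  fin_cases x <;> fin_cases y <;> fin_cases z <;>
    revert hxy hyz <;> norm_num [msDev, msmin, exMs, exSelf, exPair, Fin.ext_iff]

theorem exMs_isMsMetric : IsMsMetric exMs where
  nonneg := exMs_nonneg
  eq_iff := exMs_eq_iff
  min_le x y z := sub_nonneg.mp (exMs_msDev_nonneg x y z)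
  symm := exMs_symm
  ineq := msDev_le_add_of_separating exMs (· = 2) 2 (fun x t => exMs_msDev_nonneg x x t)
    (fun _ _ => two_le_exMs_msDev) exMs_msDev_le_two (fun _ _ _ => exMs_msDev_nonpos)

/-- `exMs` is an Mₛ-metric which is not a partial S-metric; indeed
`mₛ(1,1,1) > mₛ(1,2,3)`, violating axiom (iii) of a partial S-metric. -/
theorem exMs_isMsMetric_not_partialSMetric :
    IsMsMetric exMs ∧ exMs 0 0 0 > exMs 0 1 2 ∧ ¬ IsPartialSMetric exMs := by
  have self_gt : exMs 0 0 0 > exMs 0 1 2 := by norm_num [exMs, exSelf, Fin.ext_iff]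
  exact ⟨exMs_isMsMetric, self_gt, fun h => (h.self_le 0 1 2).not_gt self_gt⟩
end

section
/- Let (X, m_s) be an M_s-metric space. Then for all x, y, x', y' ∈ X, |(m_s(x,x,y) − m_{s,x,x,y}) − (m_s(x',x',y') − m_{s,x',x',y'})| ≤ 2[(m_s(x,x,x') − m_{s,x,x,x'}) + (m_s(y,y,y') − m_{s,y,y,y'})]. -/
open Filter Topology

def msdist {X : Type*} (m : X → X → X → ℝ) (a b : X) : ℝ :=
  m a a b - msmin m a a b

theorem msmin_self_self {X : Type*} (m : X → X → X → ℝ) (a b : X) :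
    msmin m a a b = min (m a a a) (m b b b) := by
  rw [msmin, ← min_assoc, min_self]

theorem msmin_self_self_comm {X : Type*} (m : X → X → X → ℝ) (a b : X) :
    msmin m a a b = msmin m b b a := by
  rw [msmin_self_self, msmin_self_self, min_comm]

namespace IsMsMetric

variable {X : Type*} {m : X → X → X → ℝ}

theorem msdist_comm (hm : IsMsMetric m) (a b : X) : msdist m a b = msdist m b a := by
  rw [msdist, msdist, hm.symm, msmin_self_self_comm]

theorem msdist_le (hm : IsMsMetric m) (a b c : X) :
    msdist m a b ≤ 2 * msdist m a c + msdist m b c := by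
  have := hm.ineq a a b c
  unfold msdist
  linarith

theorem msdist_le_two_mul_add_msdist (hm : IsMsMetric m) (x y x' y' : X) :
    msdist m x y ≤ 2 * (msdist m x x' + msdist m y y') + msdist m x' y' :=
  calc msdist m x y ≤ 2 * msdist m x x' + msdist m y x' := hm.msdist_le x y x'
    _ ≤ 2 * msdist m x x' + (2 * msdist m y y' + msdist m x' y') := by
        gcongr; exact hm.msdist_le y x' y'
    _ = 2 * (msdist m x x' + msdist m y y') + msdist m x' y' := by ring

end IsMsMetric

/-- The key estimate behind Lemma 1. -/
theorem abs_sub_msdist_le {X : Type*} (m : X → X → X → ℝ) (hm : IsMsMetric m)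
    (x y x' y' : X) :
    |(m x x y - msmin m x x y) - (m x' x' y' - msmin m x' x' y')| ≤
      2 * ((m x x x' - msmin m x x x') + (m y y y' - msmin m y y y')) := by
  change |msdist m x y - msdist m x' y'| ≤ 2 * (msdist m x x' + msdist m y y')
  have forward := hm.msdist_le_two_mul_add_msdist x y x' y'
  have backward := hm.msdist_le_two_mul_add_msdist x' y' x y
  rw [hm.msdist_comm x' x, hm.msdist_comm y' y] at backward
  rw [abs_sub_le_iff]
  constructor <;> linarith
end

section
/- Let (X, m_s) be an M_s-metric space and let {x_n}, {y_n} be sequences in X with x_n → x and y_n → y as n → ∞ (in the M_s sense). Then lim_{n→∞} (m_s(x_n,x_n,y_n) − m_{s,x_n,x_n,y_n}) = m_s(x,x,y) − m_{s,x,x,y}. -/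
/-! The quantity `d(u, v) = mₛ(u,u,v) − mₛ_{u,u,v}` (`msDist m u v`) is symmetric by axiom (3), and axiom (4) with
its first two arguments equal gives the relaxed triangle inequality `d(u, v) ≤ 2 d(u, t) + d(v, t)`.
Two applications of it bound `|d(xₙ, yₙ) − d(a, b)|` by `2 d(xₙ, a) + 2 d(yₙ, b)`, which tends
to `0`. -/

open Filter Topology

/-- A sequence `x` converges to `a` in the `Mₛ`-metric sense. -/
def MsConvergesTo {X : Type*} (m : X → X → X → ℝ) (x : ℕ → X) (a : X) : Prop :=
  Tendsto (fun n => m (x n) (x n) a - msmin m (x n) (x n) a) atTop (nhds 0)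

/-- A sequence `x` is `Mₛ`-Cauchy: the two double limits exist (and are finite). -/
def MsCauchy {X : Type*} (m : X → X → X → ℝ) (x : ℕ → X) : Prop :=
  (∃ L : ℝ, Tendsto
      (fun p : ℕ × ℕ => m (x p.1) (x p.1) (x p.2) - msmin m (x p.1) (x p.1) (x p.2))
      atTop (nhds L)) ∧
  (∃ L : ℝ, Tendsto
      (fun p : ℕ × ℕ => msmax m (x p.1) (x p.1) (x p.2) - msmin m (x p.1) (x p.1) (x p.2))
      atTop (nhds L))

/-- The `Mₛ`-metric space `(X, m)` is complete. -/
def MsComplete {X : Type*} (m : X → X → X → ℝ) : Prop :=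
  ∀ x : ℕ → X, MsCauchy m x → ∃ a : X,
    Tendsto (fun n => m (x n) (x n) a - msmin m (x n) (x n) a) atTop (nhds 0) ∧
    Tendsto (fun n => msmax m (x n) (x n) a - msmin m (x n) (x n) a) atTop (nhds 0)

def msDist {X : Type*} (m : X → X → X → ℝ) (u v : X) : ℝ :=
  m u u v - msmin m u u v

namespace IsMsMetric

variable {X : Type*} {m : X → X → X → ℝ}

theorem msDist_comm (hm : IsMsMetric m) (u v : X) : msDist m u v = msDist m v u := by
  rw [msDist, msDist, msmin, msmin, hm.symm u v, inf_left_idem, inf_left_idem, min_comm]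

theorem msDist_le_two_mul_add (hm : IsMsMetric m) (u v t : X) :
    msDist m u v ≤ 2 * msDist m u t + msDist m v t := by
  unfold msDist
  linarith [hm.ineq u u v t]

theorem msDist_sub_le (hm : IsMsMetric m) (u v a b : X) :
    msDist m u v - msDist m a b ≤ 2 * msDist m u a + 2 * msDist m v b := by
  linarith [hm.msDist_le_two_mul_add u v a, hm.msDist_le_two_mul_add v a b]

theorem abs_msDist_sub_le (hm : IsMsMetric m) (u v a b : X) :
    |msDist m u v - msDist m a b| ≤ 2 * msDist m u a + 2 * msDist m v b := by
  refine abs_sub_le_iff.2 ⟨hm.msDist_sub_le u v a b, ?_⟩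
  rw [hm.msDist_comm u a, hm.msDist_comm v b]
  exact hm.msDist_sub_le a b u v

end IsMsMetric

/-- Lemma 1: if `xₙ → x` and `yₙ → y` in an Mₛ-metric space, then
`mₛ(xₙ,xₙ,yₙ) − mₛ_{xₙ,xₙ,yₙ} → mₛ(x,x,y) − mₛ_{x,x,y}`. -/
theorem tendsto_msdist_of_msConvergesTo {X : Type*} (m : X → X → X → ℝ)
    (hm : IsMsMetric m) (x y : ℕ → X) (a b : X)
    (hx : MsConvergesTo m x a) (hy : MsConvergesTo m y b) :
    Tendsto (fun n => m (x n) (x n) (y n) - msmin m (x n) (x n) (y n)) atTop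
      (nhds (m a a b - msmin m a a b)) := by
  show Tendsto (fun n => msDist m (x n) (y n)) atTop (𝓝 (msDist m a b))
  have hbound : Tendsto (fun n => 2 * msDist m (x n) a + 2 * msDist m (y n) b) atTop (𝓝 0) := by
    have h := (hx.const_mul 2).add (hy.const_mul 2)
    rwa [mul_zero, add_zero] at h
  refine tendsto_iff_norm_sub_tendsto_zero.2
    (squeeze_zero (fun n => norm_nonneg _) (fun n => ?_) hbound)
  rw [Real.norm_eq_abs]
  exact hm.abs_msDist_sub_le (x n) (y n) a b
end

section
/- Let (X, m_s) be an M_s-metric space and T : X → X a self mapping such that m_s(Tx, Tx, Ty) ≤ k·m_s(x,x,y) for all x, y ∈ X, where k ∈ [0,1). Fix x_0 ∈ X and define x_{n+1} = T x_n for all n ≥ 0. Then the Picard sequence {x_n} is M_s-Cauchy; in fact, m_s(x_n,x_n,x_m) − m_{s,x_n,x_n,x_m} → 0 and M_{s,x_n,x_n,x_m} − m_{s,x_n,x_n,x_m} → 0 as n, m → ∞. -/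
/-! The contraction gives `m(xₙ, xₙ, x_{n+d}) ≤ kⁿ m(x₀, x₀, x_d)`, so it suffices to bound the
orbit distances `m(x₀, x₀, x_d)` uniformly in `d`. Axiom (4) with `t = x₁` yields
`m(x₀, x₀, x_{d+1}) ≤ m(x₀, x₀, x₀) + 2 m(x₀, x₀, x₁) + k m(x₀, x₀, x_d)`, whence the bound
`(m(x₀, x₀, x₀) + 2 m(x₀, x₀, x₁)) / (1 - k)`. Both quantities in the statement, at `(i, j)`, are then
squeezed between `0` and a multiple of `k ^ min i j`. -/

open Filter Topology

namespace IsMsMetric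

variable {X : Type*} {m : X → X → X → ℝ}

theorem msmin_nonneg (hm : IsMsMetric m) (x y z : X) : 0 ≤ msmin m x y z :=
  le_min (hm.nonneg _ _ _) (le_min (hm.nonneg _ _ _) (hm.nonneg _ _ _))

theorem le_self_add_two_mul_add (hm : IsMsMetric m) (x z t : X) :
    m x x z ≤ m x x x + 2 * m x x t + m t t z := by
  have h := hm.ineq x x z t
  rw [hm.symm z t] at h
  have hmin_le : msmin m x x z ≤ m x x x := min_le_left _ _
  linarith [hm.msmin_nonneg x x t, hm.msmin_nonneg z z t]

end IsMsMetric

section Contraction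

variable {X : Type*} {m : X → X → X → ℝ} {T : X → X} {k : ℝ}

theorem iterate_le_pow_mul (hk0 : 0 ≤ k) (hT : ∀ x y, m (T x) (T x) (T y) ≤ k * m x x y)
    (n : ℕ) (a b : X) : m (T^[n] a) (T^[n] a) (T^[n] b) ≤ k ^ n * m a a b := by
  induction n with
  | zero => simp
  | succ n ih =>
    simp only [Function.iterate_succ_apply']
    calc m (T (T^[n] a)) (T (T^[n] a)) (T (T^[n] b)) ≤ k * m (T^[n] a) (T^[n] a) (T^[n] b) :=
          hT _ _
      _ ≤ k * (k ^ n * m a a b) := mul_le_mul_of_nonneg_left ih hk0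
      _ = k ^ (n + 1) * m a a b := by ring

namespace IsMsMetric

variable (hm : IsMsMetric m) (hk0 : 0 ≤ k) (hk1 : k < 1)
  (hT : ∀ x y, m (T x) (T x) (T y) ≤ k * m x x y)
include hm hk0 hk1 hT

theorem orbit_le (x₀ : X) (d : ℕ) :
    m x₀ x₀ (T^[d] x₀) ≤ (m x₀ x₀ x₀ + 2 * m x₀ x₀ (T x₀)) / (1 - k) := by
  induction d with
  | zero =>
    rw [Function.iterate_zero_apply, le_div_iff₀ (sub_pos.2 hk1)]
    nlinarith [hm.nonneg x₀ x₀ x₀, hm.nonneg x₀ x₀ (T x₀)]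
  | succ d ih =>
    have hstep : m (T x₀) (T x₀) (T^[d + 1] x₀) ≤ k * m x₀ x₀ (T^[d] x₀) := by
      rw [Function.iterate_succ_apply']
      exact hT _ _
    have htri := hm.le_self_add_two_mul_add x₀ (T^[d + 1] x₀) (T x₀)
    rw [le_div_iff₀ (sub_pos.2 hk1)] at ih ⊢
    nlinarith [mul_le_mul_of_nonneg_left ih hk0]

theorem iterate_le_pow_min (x₀ : X) (i j : ℕ) :
    m (T^[i] x₀) (T^[i] x₀) (T^[j] x₀) ≤
      k ^ min i j * ((m x₀ x₀ x₀ + 2 * m x₀ x₀ (T x₀)) / (1 - k)) := by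
  wlog hij : i ≤ j generalizing i j
  · rw [hm.symm, min_comm]
    exact this j i (le_of_not_ge hij)
  obtain ⟨d, rfl⟩ := Nat.exists_eq_add_of_le hij
  rw [min_eq_left hij, Function.iterate_add_apply]
  calc m (T^[i] x₀) (T^[i] x₀) (T^[i] (T^[d] x₀)) ≤ k ^ i * m x₀ x₀ (T^[d] x₀) :=
        iterate_le_pow_mul hk0 hT i x₀ _
    _ ≤ _ := mul_le_mul_of_nonneg_left (hm.orbit_le hk0 hk1 hT x₀ d) (pow_nonneg hk0 i)

theorem msmax_iterate_le_pow_min (x₀ : X) (i j : ℕ) :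
    msmax m (T^[i] x₀) (T^[i] x₀) (T^[j] x₀) ≤ k ^ min i j * m x₀ x₀ x₀ := by
  have hself : ∀ l, min i j ≤ l → m (T^[l] x₀) (T^[l] x₀) (T^[l] x₀) ≤ k ^ min i j * m x₀ x₀ x₀ :=
    fun l hl => (iterate_le_pow_mul hk0 hT l x₀ x₀).trans <|
      mul_le_mul_of_nonneg_right (pow_le_pow_of_le_one hk0 hk1.le hl) (hm.nonneg _ _ _)
  exact max_le (hself i (min_le_left _ _))
    (max_le (hself i (min_le_left _ _)) (hself j (min_le_right _ _)))

end IsMsMetric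

end Contraction

theorem tendsto_zero_of_nonneg_of_le_pow_min {f : ℕ × ℕ → ℝ} {k C : ℝ} (hk0 : 0 ≤ k)
    (hk1 : k < 1) (hf0 : ∀ p, 0 ≤ f p) (hf : ∀ p, f p ≤ k ^ min p.1 p.2 * C) :
    Tendsto f atTop (𝓝 0) := by
  have hmin : Tendsto (fun p : ℕ × ℕ => min p.1 p.2) atTop atTop :=
    tendsto_atTop_atTop_of_monotone (fun _ _ h => min_le_min h.1 h.2)
      fun n => ⟨(n, n), (min_self n).ge⟩
  have hgeom : Tendsto (fun p : ℕ × ℕ => k ^ min p.1 p.2 * C) atTop (𝓝 0) := by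
    simpa using ((tendsto_pow_atTop_nhds_zero_of_lt_one hk0 hk1).comp hmin).mul_const C
  exact squeeze_zero hf0 hf hgeom

/-- The Picard sequence of a Banach-type contraction is Mₛ-Cauchy; in fact both double
limits are `0`. -/
theorem picard_msCauchy_of_contraction {X : Type*} (m : X → X → X → ℝ)
    (hm : IsMsMetric m) (T : X → X) (k : ℝ) (hk0 : 0 ≤ k) (hk1 : k < 1)
    (hT : ∀ x y, m (T x) (T x) (T y) ≤ k * m x x y) (x₀ : X) :
    MsCauchy m (fun n => T^[n] x₀) ∧
    Tendsto (fun p : ℕ × ℕ =>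
        m (T^[p.1] x₀) (T^[p.1] x₀) (T^[p.2] x₀) -
          msmin m (T^[p.1] x₀) (T^[p.1] x₀) (T^[p.2] x₀)) atTop (nhds 0) ∧
    Tendsto (fun p : ℕ × ℕ =>
        msmax m (T^[p.1] x₀) (T^[p.1] x₀) (T^[p.2] x₀) -
          msmin m (T^[p.1] x₀) (T^[p.1] x₀) (T^[p.2] x₀)) atTop (nhds 0) := by
  refine ⟨⟨⟨0, ?dist⟩, ⟨0, ?spread⟩⟩, ?dist, ?spread⟩
  case dist =>
    exact tendsto_zero_of_nonneg_of_le_pow_min hk0 hk1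
      (fun p => sub_nonneg.2 (hm.min_le _ _ _))
      (fun p => (sub_le_self _ (hm.msmin_nonneg _ _ _)).trans
        (hm.iterate_le_pow_min hk0 hk1 hT x₀ p.1 p.2))
  case spread =>
    exact tendsto_zero_of_nonneg_of_le_pow_min hk0 hk1
      (fun p => sub_nonneg.2 ((min_le_left _ _).trans (le_max_left _ _)))
      (fun p => (sub_le_self _ (hm.msmin_nonneg _ _ _)).trans
        (hm.msmax_iterate_le_pow_min hk0 hk1 hT x₀ p.1 p.2))
end

section
/- Let (X, m_s) be an M_s-metric space and T : X → X a self mapping such that m_s(Tx, Tx, Ty) ≤ λ[m_s(x,x,Tx) + m_s(y,y,Ty)] for all x, y ∈ X, where λ ∈ [0,1/2). Fix x_0 ∈ X, define x_{n+1} = T x_n for all n ≥ 0, and set m_{s,n} := m_s(x_n, x_n, x_{n+1}). Then for all n ≥ 0, m_{s,n} ≤ μ^n · m_{s,0}, where μ = λ/(1 − λ) < 1; in particular lim_{n→∞} m_s(x_n, x_n, x_{n+1}) = 0. -/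
open Filter Topology

theorem kannan_step_le {X : Type*} (m : X → X → X → ℝ) (T : X → X) {lam : ℝ} (hl1 : lam < 1)
    (hT : ∀ x y, m (T x) (T x) (T y) ≤ lam * (m x x (T x) + m y y (T y))) (x : X) :
    m (T x) (T x) (T (T x)) ≤ lam / (1 - lam) * m x x (T x) := by
  have h := hT x (T x)
  rw [div_mul_eq_mul_div, le_div_iff₀ (sub_pos.mpr hl1)]
  linarith

theorem kannan_iterate_le_geom {X : Type*} (m : X → X → X → ℝ) (T : X → X) {lam : ℝ}
    (hl0 : 0 ≤ lam) (hl1 : lam < 1)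
    (hT : ∀ x y, m (T x) (T x) (T y) ≤ lam * (m x x (T x) + m y y (T y))) (x₀ : X) (n : ℕ) :
    m (T^[n] x₀) (T^[n] x₀) (T^[n + 1] x₀) ≤ (lam / (1 - lam)) ^ n * m x₀ x₀ (T x₀) :=
  le_geom (u := fun k => m (T^[k] x₀) (T^[k] x₀) (T^[k + 1] x₀))
    (div_nonneg hl0 (sub_nonneg.mpr hl1.le)) n fun k _ => by
      simpa only [Function.iterate_succ_apply'] using kannan_step_le m T hl1 hT (T^[k] x₀)

theorem div_one_sub_lt_one_of_lt_half {lam : ℝ} (hl1 : lam < 1 / 2) : lam / (1 - lam) < 1 :=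
  (div_lt_one (by linarith)).mpr (by linarith)

/-- For a Kannan-type contraction, the Picard sequence satisfies
`mₛₙ ≤ μⁿ · mₛ₀` with `μ = λ/(1−λ) < 1`; in particular `mₛ(xₙ,xₙ,xₙ₊₁) → 0`. -/
theorem picard_geometric_of_kannanContraction {X : Type*} (m : X → X → X → ℝ)
    (hm : IsMsMetric m) (T : X → X) (lam : ℝ)
    (hl0 : 0 ≤ lam) (hl1 : lam < 1 / 2)
    (hT : ∀ x y, m (T x) (T x) (T y) ≤ lam * (m x x (T x) + m y y (T y)))
    (x₀ : X) :
    lam / (1 - lam) < 1 ∧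
    (∀ n : ℕ, m (T^[n] x₀) (T^[n] x₀) (T^[n + 1] x₀) ≤
      (lam / (1 - lam)) ^ n * m x₀ x₀ (T x₀)) ∧
    Tendsto (fun n => m (T^[n] x₀) (T^[n] x₀) (T^[n + 1] x₀)) atTop (nhds 0) := by
  have hμ1 := div_one_sub_lt_one_of_lt_half hl1
  have hlam_lt_one : lam < 1 := by linarith
  have hgeom := kannan_iterate_le_geom m T hl0 hlam_lt_one hT x₀
  have hμ0 : 0 ≤ lam / (1 - lam) := div_nonneg hl0 (sub_nonneg.mpr hlam_lt_one.le)
  refine ⟨hμ1, hgeom, squeeze_zero (fun n => hm.nonneg _ _ _) hgeom ?_⟩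
  simpa using (tendsto_pow_atTop_nhds_zero_of_lt_one hμ0 hμ1).mul_const (m x₀ x₀ (T x₀))
end

section
/- Let (X, m_s) be an M_s-metric space and T : X → X a self mapping such that m_s(Tx, Tx, Ty) ≤ λ[m_s(x,x,Tx) + m_s(y,y,Ty)] for all x, y ∈ X, where λ ∈ [0,1/2). If u, v ∈ X are fixed points of T (i.e. Tu = u and Tv = v), then u = v. -/
open Filter Topology

open Function

namespace IsMsMetric

variable {X : Type*} {m : X → X → X → ℝ}

theorem eq_of_diag_eq_zero (hm : IsMsMetric m) {x y : X} (hx : m x x x = 0) (hy : m y y y = 0)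
    (hxy : m x x y = 0) : x = y :=
  (hm.eq_iff x y).mp ⟨hx.trans hy.symm, hy.trans hxy.symm⟩

variable {T : X → X} {lam : ℝ}

theorem diag_eq_zero_of_isFixedPt (hm : IsMsMetric m) (hl : lam < 1 / 2)
    (hT : ∀ x y, m (T x) (T x) (T y) ≤ lam * (m x x (T x) + m y y (T y)))
    {u : X} (hu : IsFixedPt T u) : m u u u = 0 := by
  have h := hT u u
  rw [hu] at h
  nlinarith [hm.nonneg u u u]

theorem eq_zero_of_isFixedPt (hm : IsMsMetric m) (hl : lam < 1 / 2)
    (hT : ∀ x y, m (T x) (T x) (T y) ≤ lam * (m x x (T x) + m y y (T y)))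
    {u v : X} (hu : IsFixedPt T u) (hv : IsFixedPt T v) : m u u v = 0 := by
  have h := hT u v
  rw [hu, hv, hm.diag_eq_zero_of_isFixedPt hl hT hu, hm.diag_eq_zero_of_isFixedPt hl hT hv,
    add_zero, mul_zero] at h
  exact h.antisymm (hm.nonneg u u v)

end IsMsMetric

theorem fixedPoint_unique_of_kannan_general {X : Type*} (m : X → X → X → ℝ)
    (hm : IsMsMetric m) (T : X → X) (lam : ℝ)
    (hl1 : lam < 1 / 2)
    (hT : ∀ x y, m (T x) (T x) (T y) ≤ lam * (m x x (T x) + m y y (T y)))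
    (u v : X) (hu : T u = u) (hv : T v = v) : u = v :=
  hm.eq_of_diag_eq_zero (hm.diag_eq_zero_of_isFixedPt hl1 hT hu)
    (hm.diag_eq_zero_of_isFixedPt hl1 hT hv) (hm.eq_zero_of_isFixedPt hl1 hT hu hv)

/-- Fixed points of a Kannan-type contraction are unique. -/
theorem fixedPoint_unique_of_kannan {X : Type*} (m : X → X → X → ℝ)
    (hm : IsMsMetric m) (T : X → X) (lam : ℝ)
    (hl0 : 0 ≤ lam) (hl1 : lam < 1 / 2)
    (hT : ∀ x y, m (T x) (T x) (T y) ≤ lam * (m x x (T x) + m y y (T y)))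
    (u v : X) (hu : T u = u) (hv : T v = v) : u = v :=
  fixedPoint_unique_of_kannan_general m hm T lam hl1 hT u v hu hv
end

section
/- Let (X, m_s) be an M_s-metric space and T : X → X a self mapping such that m_s(Tx, Ty, Tz) ≤ m_s(x,y,z) − φ(m_s(x,y,z)) for all x, y, z ∈ X, where φ : [0,∞) → [0,∞) is continuous, non-decreasing, φ(t) = 0 if and only if t = 0, and φ(t) > 0 for all t > 0. Fix x_0 ∈ X and define x_{n+1} = T x_n for all n ≥ 0. Then the sequence n ↦ m_s(x_n, x_{n+1}, x_{n+1}) is monotone non-increasing and lim_{n→∞} m_s(x_n, x_{n+1}, x_{n+1}) = 0. -/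
/-!
Along the Picard orbit, `aₙ = mₛ(xₙ, xₙ₊₁, xₙ₊₁)` satisfies `aₙ₊₁ ≤ aₙ - φ(aₙ)`: this is the
contraction applied to the triple `(xₙ, xₙ₊₁, xₙ₊₁)`. Hence `aₙ` decreases to some `L ≥ 0`, and
passing to the limit with the continuity of `φ` gives `L ≤ L - φ(L)`, so `φ(L) ≤ 0` and `L = 0`.
-/

open Filter Topology

section DescentByPhi

variable {a : ℕ → ℝ} {phi : ℝ → ℝ}

theorem antitone_of_le_sub_phi (hphi_nonneg : ∀ t, 0 ≤ t → 0 ≤ phi t) (ha : ∀ n, 0 ≤ a n)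
    (hstep : ∀ n, a (n + 1) ≤ a n - phi (a n)) : Antitone a :=
  antitone_nat_of_succ_le fun n => by linarith [hstep n, hphi_nonneg (a n) (ha n)]

theorem phi_nonpos_of_tendsto_of_le_sub_phi (hphi_cont : ContinuousOn phi (Set.Ici 0))
    (ha : ∀ n, 0 ≤ a n) (hstep : ∀ n, a (n + 1) ≤ a n - phi (a n)) {L : ℝ}
    (hL : Tendsto a atTop (𝓝 L)) : phi L ≤ 0 := by
  have hphiL : Tendsto (fun n => phi (a n)) atTop (𝓝 (phi L)) :=
    (hphi_cont L (ge_of_tendsto' hL ha)).tendsto.comp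
      (tendsto_nhdsWithin_iff.2 ⟨hL, .of_forall ha⟩)
  have : L ≤ L - phi L :=
    le_of_tendsto_of_tendsto' (hL.comp (tendsto_add_atTop_nat 1)) (hL.sub hphiL) hstep
  linarith

theorem tendsto_zero_of_le_sub_phi (hphi_nonneg : ∀ t, 0 ≤ t → 0 ≤ phi t)
    (hphi_cont : ContinuousOn phi (Set.Ici 0)) (hphi_pos : ∀ t, 0 < t → 0 < phi t)
    (ha : ∀ n, 0 ≤ a n) (hstep : ∀ n, a (n + 1) ≤ a n - phi (a n)) :
    Tendsto a atTop (𝓝 0) := by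
  obtain ⟨L, hL⟩ : ∃ L, Tendsto a atTop (𝓝 L) :=
    ⟨_, tendsto_atTop_ciInf (antitone_of_le_sub_phi hphi_nonneg ha hstep)
      ⟨0, by rintro _ ⟨n, rfl⟩; exact ha n⟩⟩
  have hL_nonpos : L ≤ 0 := not_lt.1 fun hL_pos =>
    (hphi_pos L hL_pos).not_ge (phi_nonpos_of_tendsto_of_le_sub_phi hphi_cont ha hstep hL)
  rwa [le_antisymm hL_nonpos (ge_of_tendsto' hL ha)] at hL

end DescentByPhi

theorem iterate_succ_le_sub_phi {X : Type*} {m : X → X → X → ℝ} {T : X → X} {phi : ℝ → ℝ}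
    (hT : ∀ x y z, m (T x) (T y) (T z) ≤ m x y z - phi (m x y z)) (x₀ : X) (n : ℕ) :
    m (T^[n + 1] x₀) (T^[n + 1 + 1] x₀) (T^[n + 1 + 1] x₀) ≤
      m (T^[n] x₀) (T^[n + 1] x₀) (T^[n + 1] x₀) -
        phi (m (T^[n] x₀) (T^[n + 1] x₀) (T^[n + 1] x₀)) := by
  simpa only [Function.iterate_succ_apply' T (n + 1), Function.iterate_succ_apply' T n]
    using hT (T^[n] x₀) (T^[n + 1] x₀) (T^[n + 1] x₀)

theorem picard_antitone_of_phiContraction_general {X : Type*} (m : X → X → X → ℝ)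
    (hm : IsMsMetric m) (T : X → X) (phi : ℝ → ℝ)
    (hphi_nonneg : ∀ t, 0 ≤ t → 0 ≤ phi t)
    (hphi_cont : ContinuousOn phi (Set.Ici 0))
    (hphi_pos : ∀ t, 0 < t → 0 < phi t)
    (hT : ∀ x y z, m (T x) (T y) (T z) ≤ m x y z - phi (m x y z))
    (x₀ : X) :
    Antitone (fun n => m (T^[n] x₀) (T^[n + 1] x₀) (T^[n + 1] x₀)) ∧
    Tendsto (fun n => m (T^[n] x₀) (T^[n + 1] x₀) (T^[n + 1] x₀)) atTop (nhds 0) := by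
  have ha : ∀ n, 0 ≤ m (T^[n] x₀) (T^[n + 1] x₀) (T^[n + 1] x₀) := fun n => hm.nonneg _ _ _
  have hstep := iterate_succ_le_sub_phi hT x₀
  exact ⟨antitone_of_le_sub_phi hphi_nonneg ha hstep,
    tendsto_zero_of_le_sub_phi hphi_nonneg hphi_cont hphi_pos ha hstep⟩

/-- For a weak φ-contraction, `n ↦ mₛ(xₙ, xₙ₊₁, xₙ₊₁)` along the Picard sequence is
monotone non-increasing and tends to `0`. -/
theorem picard_antitone_of_phiContraction {X : Type*} (m : X → X → X → ℝ)
    (hm : IsMsMetric m) (T : X → X) (phi : ℝ → ℝ)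
    (hphi_nonneg : ∀ t, 0 ≤ t → 0 ≤ phi t)
    (hphi_cont : ContinuousOn phi (Set.Ici 0))
    (hphi_mono : MonotoneOn phi (Set.Ici 0))
    (hphi_zero : ∀ t, 0 ≤ t → (phi t = 0 ↔ t = 0))
    (hphi_pos : ∀ t, 0 < t → 0 < phi t)
    (hT : ∀ x y z, m (T x) (T y) (T z) ≤ m x y z - phi (m x y z))
    (x₀ : X) :
    Antitone (fun n => m (T^[n] x₀) (T^[n + 1] x₀) (T^[n + 1] x₀)) ∧
    Tendsto (fun n => m (T^[n] x₀) (T^[n + 1] x₀) (T^[n + 1] x₀)) atTop (nhds 0) :=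
  picard_antitone_of_phiContraction_general m hm T phi hphi_nonneg hphi_cont hphi_pos hT x₀
end

section
/- Let (X, m_s) be an M_s-metric space and T : X → X a self mapping such that m_s(Tx, Ty, Tz) ≤ m_s(x,y,z) − φ(m_s(x,y,z)) for all x, y, z ∈ X, where φ : [0,∞) → [0,∞) is continuous, non-decreasing, φ(t) = 0 if and only if t = 0, and φ(t) > 0 for all t > 0. If u, v ∈ X are fixed points of T (i.e. Tu = u and Tv = v), then m_s(u,u,v) = 0, m_s(u,u,u) = 0, m_s(v,v,v) = 0, and u = v. -/
open Filter Topology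

theorem IsMsMetric.eq_of_eq_zero {X : Type*} {m : X → X → X → ℝ} (hm : IsMsMetric m)
    {x y : X} (hxy : m x x y = 0) (hx : m x x x = 0) (hy : m y y y = 0) : x = y :=
  (hm.eq_iff x y).mp ⟨hx.trans hy.symm, hy.trans hxy.symm⟩

theorem IsMsMetric.eq_zero_of_isFixedPt_s15 {X : Type*} {m : X → X → X → ℝ} (hm : IsMsMetric m)
    {T : X → X} {phi : ℝ → ℝ} (hphi_pos : ∀ t, 0 < t → 0 < phi t)
    (hT : ∀ x y z, m (T x) (T y) (T z) ≤ m x y z - phi (m x y z))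
    {a b c : X} (ha : T a = a) (hb : T b = b) (hc : T c = c) : m a b c = 0 := by
  have hle : m a b c ≤ m a b c - phi (m a b c) := by simpa only [ha, hb, hc] using hT a b c
  by_contra hne
  linarith [hphi_pos _ ((hm.nonneg a b c).lt_of_ne (Ne.symm hne))]

theorem fixedPoint_unique_of_phiContraction_general {X : Type*} (m : X → X → X → ℝ)
    (hm : IsMsMetric m) (T : X → X) (phi : ℝ → ℝ)
    (hphi_pos : ∀ t, 0 < t → 0 < phi t)
    (hT : ∀ x y z, m (T x) (T y) (T z) ≤ m x y z - phi (m x y z))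
    (u v : X) (hu : T u = u) (hv : T v = v) :
    m u u v = 0 ∧ m u u u = 0 ∧ m v v v = 0 ∧ u = v := by
  have huuv := hm.eq_zero_of_isFixedPt_s15 hphi_pos hT hu hu hv
  have huuu := hm.eq_zero_of_isFixedPt_s15 hphi_pos hT hu hu hu
  have hvvv := hm.eq_zero_of_isFixedPt_s15 hphi_pos hT hv hv hv
  exact ⟨huuv, huuu, hvvv, hm.eq_of_eq_zero huuv huuu hvvv⟩

/-- Fixed points of a weak φ-contraction: zero distances and uniqueness. -/
theorem fixedPoint_unique_of_phiContraction {X : Type*} (m : X → X → X → ℝ)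
    (hm : IsMsMetric m) (T : X → X) (phi : ℝ → ℝ)
    (hphi_nonneg : ∀ t, 0 ≤ t → 0 ≤ phi t)
    (hphi_cont : ContinuousOn phi (Set.Ici 0))
    (hphi_mono : MonotoneOn phi (Set.Ici 0))
    (hphi_zero : ∀ t, 0 ≤ t → (phi t = 0 ↔ t = 0))
    (hphi_pos : ∀ t, 0 < t → 0 < phi t)
    (hT : ∀ x y z, m (T x) (T y) (T z) ≤ m x y z - phi (m x y z))
    (u v : X) (hu : T u = u) (hv : T v = v) :
    m u u v = 0 ∧ m u u u = 0 ∧ m v v v = 0 ∧ u = v :=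
  fixedPoint_unique_of_phiContraction_general m hm T phi hphi_pos hT u v hu hv
end
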